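/- Let m ∈ ℝ and s > 0, and let φ denote the density of N(m, s²). Then the pushforward of N(m, s²) under the map y ↦ sinh²(y) is concentrated on [0,∞) and is absolutely continuous with respect to Lebesgue measure, with density y ↦ (1/(2√(y(1+y))))·(φ(arcsinh(√y)) + φ(−arcsinh(√y))) for y > 0. -/

import Mathlib

/-!
The map `y ↦ sinh² y` is even, and on `(0, ∞)` it is inverted by `x ↦ arsinh √x`, whose
derivative is `1 / (2 √(x (1 + x)))`. Discarding the null set `{0}`, the preimage of a Borel
set `A` splits into the images of `A ∩ (0, ∞)` under the two branches `± arsinh √·`, and the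
one-dimensional change of variables formula on each branch produces the two terms of the density.
-/

open MeasureTheory ProbabilityTheory

/-- Density of a Gaussian `N(m, s²)` evaluated at `u`. -/
noncomputable def gaussDensity (m s u : ℝ) : ℝ :=
  (1 / Real.sqrt (2 * Real.pi * s ^ 2)) * Real.exp (-(u - m) ^ 2 / (2 * s ^ 2))

open Real Set
open scoped ENNReal

theorem setLIntegral_eq_inter_Iio_add_inter_Ioi {α : Type*} [LinearOrder α] [TopologicalSpace α]
    [OrderClosedTopology α] [MeasurableSpace α] [OpensMeasurableSpace α] {μ : Measure α}
    [NullSingletonClass μ] (f : α → ℝ≥0∞) (S : Set α) (a : α) :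
    ∫⁻ x in S, f x ∂μ = ∫⁻ x in S ∩ Iio a, f x ∂μ + ∫⁻ x in S ∩ Ioi a, f x ∂μ := by
  rw [← lintegral_inter_add_sdiff f S measurableSet_Iio, sdiff_eq, compl_Iio,
    setLIntegral_congr ((ae_eq_refl S).inter (Ioi_ae_eq_Ici (μ := μ) (a := a))).symm]

theorem hasDerivAt_arsinh_sqrt {x : ℝ} (hx : 0 < x) :
    HasDerivAt (fun x => arsinh √x) (1 / (2 * √(x * (1 + x)))) x := by
  refine ((hasDerivAt_arsinh √x).comp x (hasDerivAt_sqrt hx.ne')).congr_deriv ?_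
  have : 0 < √(1 + x) := sqrt_pos.mpr (by linarith)
  rw [sq_sqrt hx.le, sqrt_mul hx.le]
  field_simp

theorem strictMonoOn_arsinh_sqrt : StrictMonoOn (fun x => arsinh √x) (Ici 0) :=
  arsinh_strictMono.comp_strictMonoOn strictMonoOn_sqrt

theorem image_arsinh_sqrt_inter_Ioi (A : Set ℝ) :
    (fun x => arsinh √x) '' (A ∩ Ioi 0) = (fun y => sinh y ^ 2) ⁻¹' A ∩ Ioi 0 := by
  ext y
  constructor
  · rintro ⟨x, ⟨hxA, hx⟩, rfl⟩
    refine ⟨?_, arsinh_pos_iff.2 (sqrt_pos.2 hx)⟩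
    simpa [sq_sqrt hx.le] using hxA
  · rintro ⟨hyA, hy⟩
    have hsinh : 0 < sinh y := sinh_pos_iff.2 hy
    exact ⟨sinh y ^ 2, ⟨hyA, pow_pos hsinh 2⟩, by simp [sqrt_sq hsinh.le]⟩

theorem neg_image_sinh_sq_preimage_inter_Ioi (A : Set ℝ) :
    Neg.neg '' ((fun y => sinh y ^ 2) ⁻¹' A ∩ Ioi 0) = (fun y => sinh y ^ 2) ⁻¹' A ∩ Iio 0 := by
  ext y
  simp [image_neg_eq_neg]

theorem image_neg_arsinh_sqrt_inter_Ioi (A : Set ℝ) :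
    (fun x => -arsinh √x) '' (A ∩ Ioi 0) = (fun y => sinh y ^ 2) ⁻¹' A ∩ Iio 0 := by
  rw [← neg_image_sinh_sq_preimage_inter_Ioi, ← image_arsinh_sqrt_inter_Ioi, image_image]

theorem map_sinh_sq_withDensity {φ : ℝ → ℝ≥0∞} (hφ : Measurable φ) :
    (volume.withDensity φ).map (fun y => sinh y ^ 2) = volume.withDensity ((Ioi 0).indicator
      fun y => ENNReal.ofReal (1 / (2 * √(y * (1 + y)))) * (φ (arsinh √y) + φ (-arsinh √y))) := by
  have hf : Measurable fun y : ℝ => sinh y ^ 2 := by fun_prop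
  have hg : Measurable fun x : ℝ => arsinh √x :=
    (continuous_arsinh.comp continuous_sqrt).measurable
  have hinj : InjOn (fun x => arsinh √x) (Ioi 0) :=
    strictMonoOn_arsinh_sqrt.injOn.mono Ioi_subset_Ici_self
  ext A hA
  have hA₀ : MeasurableSet (A ∩ Ioi 0) := hA.inter measurableSet_Ioi
  rw [Measure.map_apply hf hA, withDensity_apply _ (hf hA), withDensity_apply _ hA,
    setLIntegral_indicator measurableSet_Ioi, setLIntegral_eq_inter_Iio_add_inter_Ioi _ _ 0,
    ← image_neg_arsinh_sqrt_inter_Ioi, ← image_arsinh_sqrt_inter_Ioi,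
    lintegral_image_eq_lintegral_abs_deriv_mul (f := fun x => -arsinh √x) hA₀
      (fun x hx => (hasDerivAt_arsinh_sqrt hx.2).neg.hasDerivWithinAt)
      (fun x hx y hy h => hinj hx.2 hy.2 (neg_injective h)),
    lintegral_image_eq_lintegral_abs_deriv_mul hA₀
      (fun x hx => (hasDerivAt_arsinh_sqrt hx.2).hasDerivWithinAt)
      (hinj.mono inter_subset_right), ← lintegral_add_right _ (by fun_prop), inter_comm]
  congr 1
  ext x
  have : 0 ≤ 1 / (2 * √(x * (1 + x))) := by positivity
  rw [abs_neg, abs_of_nonneg this]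
  ring

theorem gaussDensity_nonneg (m s u : ℝ) : 0 ≤ gaussDensity m s u := by
  unfold gaussDensity
  positivity

theorem gaussianPDF_toNNReal_sq (m s : ℝ) :
    gaussianPDF m (s ^ 2).toNNReal = fun u => ENNReal.ofReal (gaussDensity m s u) := by
  ext u
  simp [gaussianPDF, gaussianPDFReal, gaussDensity, coe_toNNReal _ (sq_nonneg s)]

/-- The pushforward of `N(m, s²)` under `y ↦ sinh²(y)` is concentrated on `[0,∞)` and is
absolutely continuous with respect to Lebesgue measure, with density
`y ↦ (1/(2√(y(1+y)))) (φ(arcsinh √y) + φ(−arcsinh √y))` for `y > 0`, where `φ` is the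
`N(m,s²)` density. -/
theorem gaussian_sinh_sq_pushforward_density (m s : ℝ) (hs : 0 < s) :
    Measure.map (fun y : ℝ => Real.sinh y ^ 2) (gaussianReal m ((s ^ 2).toNNReal))
      = volume.withDensity
          (Set.indicator (Set.Ioi (0 : ℝ)) fun y =>
            ENNReal.ofReal
              ((1 / (2 * Real.sqrt (y * (1 + y))))
                * (gaussDensity m s (Real.arsinh (Real.sqrt y))
                    + gaussDensity m s (-Real.arsinh (Real.sqrt y))))) := by
  rw [gaussianReal_of_var_ne_zero m (toNNReal_pos.2 (pow_pos hs 2)).ne',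
    map_sinh_sq_withDensity (measurable_gaussianPDF _ _), gaussianPDF_toNNReal_sq]
  congr! 3 with y
  rw [ENNReal.ofReal_mul (by positivity),
    ENNReal.ofReal_add (gaussDensity_nonneg _ _ _) (gaussDensity_nonneg _ _ _)]
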